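/- arXiv:2301.13205 — 3 statements merged into one kernel-verified Lean document; each statement's English description precedes it below -/
import Mathlib

section
/- Let X be a countably infinite type of variables, and let words be elements of the free monoid on X ⊕ X (variables and their starred copies). A word identity u ≈ v holds in the involution monoid (ℕ × ℕ, *) (with (m,n)* = (n,m) and componentwise addition) if and only if it is balanced, i.e., for every letter x ∈ X ⊕ X, the number of occurrences of x in u equals the number of occurrences of x in v. -/
/-!
Balanced words are permutations of each other, so they evaluate equally in any commutative
monoid. Conversely, the substitution sending `x` to `(1, 0)` and every other variable to `0`
evaluates a word to the pair (occurrences of `x`, occurrences of `x*`).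
-/

-- The core library derives `BEq` on sums but does not prove it lawful.
instance Sum.instReflBEq {α β : Type*} [BEq α] [ReflBEq α] [BEq β] [ReflBEq β] :
    ReflBEq (α ⊕ β) where
  rfl {a} := by
    cases a with
    | inl a => exact beq_self_eq_true a
    | inr b => exact beq_self_eq_true b

instance Sum.instLawfulBEq {α β : Type*} [BEq α] [LawfulBEq α] [BEq β] [LawfulBEq β] :
    LawfulBEq (α ⊕ β) where
  eq_of_beq {a b} h := by
    cases a <;> cases b <;> first | cases h | exact congrArg _ (eq_of_beq h)

theorem sum_map_elim_single_swap {X : Type*} [DecidableEq X] (x : X) (w : List (X ⊕ X)) :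
    (w.map (Sum.elim (Pi.single x (1, 0))
        fun y => ((Pi.single x (1, 0) : X → ℕ × ℕ) y).swap)).sum =
      (w.count (.inl x), w.count (.inr x)) := by
  induction w with
  | nil => rfl
  | cons b w ih =>
    rw [List.map_cons, List.sum_cons, ih]
    rcases b with y | y <;> by_cases hy : y = x <;>
      simp [hy, Pi.single_apply, add_comm]

/-- A word identity `u ≈ v` over the alphabet `X ⊕ X` (variables and starred variables,
with `X = ℕ` countably infinite) holds in the involution monoid `(ℕ × ℕ, *)` with
componentwise addition and `(m,n)* = (n,m)` if and only if it is balanced.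
A substitution compatible with the involution is determined by a map `f : X → ℕ × ℕ`,
the starred variable `x*` being sent to `(f x).swap`. -/
theorem stmt1 (u v : List (ℕ ⊕ ℕ)) :
    (∀ f : ℕ → ℕ × ℕ,
        (u.map (Sum.elim f (fun x => (f x).swap))).sum =
        (v.map (Sum.elim f (fun x => (f x).swap))).sum) ↔
      (∀ a : ℕ ⊕ ℕ, u.count a = v.count a) := by
  refine ⟨fun h a => ?_, fun h f => ((List.perm_iff_count.mpr h).map _).sum_eq⟩
  have hcount := fun x => h (Pi.single x (1, 0))
  simp only [sum_map_elim_single_swap, Prod.ext_iff] at hcount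
  rcases a with x | x
  · exact (hcount x).1
  · exact (hcount x).2
end

section
/- Let u, v be words over an alphabet such that: u and v are permutations of each other (each letter occurs equally often); for all pairs of letters x ≠ y, ⟵occ_x(y,u) = ⟵occ_x(y,v) and ⟶occ_x(y,u) = ⟶occ_x(y,v). Suppose u = u₁·z·u₂ where z does not occur in u₂. Then v factors as v = v₁·z·v₂, where z does not occur in v₂ and v₂ is a permutation of u₂. -/
/-- Number of occurrences of `y` strictly before the first occurrence of `x` in `w`. -/
def leftCount (x y : ℕ) (w : List ℕ) : ℕ :=
  (w.takeWhile (fun a => a ≠ x)).count y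

/-- Number of occurrences of `y` strictly after the last occurrence of `x` in `w`. -/
def rightCount (x y : ℕ) (w : List ℕ) : ℕ :=
  leftCount x y w.reverse

theorem List.eq_append_cons_of_mem_last {α : Type*} {a : α} {l : List α} (h : a ∈ l) :
    ∃ s t, l = s ++ a :: t ∧ a ∉ t := by
  obtain ⟨t, s, hl, ht⟩ := List.eq_append_cons_of_mem (List.mem_reverse.2 h)
  refine ⟨s.reverse, t.reverse, ?_, by simpa using ht⟩
  rw [← List.reverse_reverse l, hl]
  simp

theorem leftCount_append_cons (w₁ w₂ : List ℕ) (x y : ℕ) (hx : x ∉ w₁) :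
    leftCount x y (w₁ ++ x :: w₂) = w₁.count y := by
  rw [leftCount,
    List.takeWhile_append_of_pos (fun b hb => by simpa using ne_of_mem_of_not_mem hb hx)]
  simp

theorem rightCount_append_cons (w₁ w₂ : List ℕ) (x y : ℕ) (hx : x ∉ w₂) :
    rightCount x y (w₁ ++ x :: w₂) = w₂.count y := by
  rw [rightCount, List.reverse_append, List.reverse_cons, List.append_assoc, List.singleton_append,
    leftCount_append_cons _ _ _ _ (by simpa using hx), List.count_reverse]

theorem stmt18_general (u v u₁ u₂ : List ℕ) (z : ℕ)
    (hbal : ∀ a : ℕ, u.count a = v.count a)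
    (hR : ∀ x y : ℕ, x ≠ y → rightCount x y u = rightCount x y v)
    (hu : u = u₁ ++ z :: u₂) (hz : z ∉ u₂) :
    ∃ v₁ v₂ : List ℕ, v = v₁ ++ z :: v₂ ∧ z ∉ v₂ ∧
      ∀ a : ℕ, v₂.count a = u₂.count a := by
  have hzv : z ∈ v := by
    rw [← List.count_pos_iff, ← hbal, List.count_pos_iff, hu]
    exact List.mem_append_cons_self
  obtain ⟨v₁, v₂, hv, hzv₂⟩ := List.eq_append_cons_of_mem_last hzv
  refine ⟨v₁, v₂, hv, hzv₂, fun a => ?_⟩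
  obtain rfl | ha := eq_or_ne z a
  · rw [List.count_eq_zero.2 hzv₂, List.count_eq_zero.2 hz]
  · rw [← rightCount_append_cons v₁ v₂ z a hzv₂, ← hv, ← hR z a ha, hu,
      rightCount_append_cons u₁ u₂ z a hz]

/-- Let `u`, `v` be words that are permutations of each other such that for any pair of
distinct letters `x ≠ y` the numbers of occurrences of `y` before the first occurrence
of `x` and after the last occurrence of `x` agree in `u` and `v`. If `u = u₁·z·u₂`
with `z` not occurring in `u₂`, then `v = v₁·z·v₂` with `z` not occurring in `v₂`
and `v₂` a permutation of `u₂`. -/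
theorem stmt18 (u v u₁ u₂ : List ℕ) (z : ℕ)
    (hbal : ∀ a : ℕ, u.count a = v.count a)
    (hL : ∀ x y : ℕ, x ≠ y → leftCount x y u = leftCount x y v)
    (hR : ∀ x y : ℕ, x ≠ y → rightCount x y u = rightCount x y v)
    (hu : u = u₁ ++ z :: u₂) (hz : z ∉ u₂) :
    ∃ v₁ v₂ : List ℕ, v = v₁ ++ z :: v₂ ∧ z ∉ v₂ ∧
      ∀ a : ℕ, v₂.count a = u₂.count a :=
  stmt18_general u v u₁ u₂ z hbal hR hu hz
end

section
/- For each word w over the alphabet {1,2} define Λ(w) = P^{ℓ}·K ∈ M₂(S) if w contains the letter 2 and w has a 1-2 left precedence of index ℓ (with convention Λ(w) = K if no 1 precedes the first 2), and Λ(w) = P^{|w|} if w contains only 1s, where P = [[s,0],[0,1]], K = [[0,1],[0,1]] over a commutative idempotent semiring S with s of infinite multiplicative order. Then Λ is multiplicative on concatenation: Λ(w·w') = Λ(w)·Λ(w') for all words w, w' over {1,2}, where we use K·P^m = K and K·K = K and the left-precedence of a concatenation: if w contains a 2 then lp(w·w') = lp(w), and if w = 1^m contains only 1s then the 1-2 left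 precedence index of w·w' is m plus that of w' (when w' contains a 2). -/
/-!
If `w` contains a `2`, the first `2` of `w ++ w'` lies in `w`, so `Λ(w ++ w') = Λ(w)` while
`Λ(w) Λ(w') = Λ(w)` because `K` absorbs every `P^m` and `K` on the right. If `w = 1^m`, the
`1`s before the first `2` of `w ++ w'` are those of `w` followed by those of `w'`, and `P^m`
factors out on the left.
-/

/-- The matrix `Λ(w)` associated to a word `w` over `{1, 2}`: if `w` contains the
letter `2` and has a `1`-`2` left precedence of index `ℓ` (the number of `1`s before
the first `2`, with `Λ(w) = K` when `ℓ = 0`), then `Λ(w) = P^ℓ·K`; if `w` contains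
only `1`s then `Λ(w) = P^{|w|}`. Here `P = [[s,0],[0,1]]` and `K = [[0,1],[0,1]]`. -/
def Lam {S : Type*} [CommSemiring S] (s : S) (w : List ℕ) :
    Matrix (Fin 2) (Fin 2) S :=
  if 2 ∈ w then
    (!![s, 0; 0, 1] : Matrix (Fin 2) (Fin 2) S) ^
        ((w.takeWhile (fun a => a ≠ 2)).count 1) * !![0, 1; 0, 1]
  else (!![s, 0; 0, 1] : Matrix (Fin 2) (Fin 2) S) ^ w.length

theorem List.takeWhile_append_of_exists_not {α : Type*} {p : α → Bool} {l₁ : List α}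
    (h : ∃ a ∈ l₁, p a = false) (l₂ : List α) :
    (l₁ ++ l₂).takeWhile p = l₁.takeWhile p := by
  induction l₁ with
  | nil => simp at h
  | cons x l ih =>
    cases hx : p x
    · simp [hx]
    · have hl : ∃ a ∈ l, p a = false := by
        obtain ⟨a, ha, hpa⟩ := h
        rcases List.mem_cons.mp ha with rfl | ha
        · simp [hx] at hpa
        · exact ⟨a, ha, hpa⟩
      simp [hx, ih hl]

section

variable {S : Type*} [CommSemiring S]

theorem K_mul_P_pow (s : S) (m : ℕ) :
    (!![0, 1; 0, 1] : Matrix (Fin 2) (Fin 2) S) * !![s, 0; 0, 1] ^ m = !![0, 1; 0, 1] := by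
  induction m with
  | zero => simp
  | succ n ih => rw [pow_succ, ← mul_assoc, ih]; simp

theorem K_mul_Lam (s : S) (w : List ℕ) :
    (!![0, 1; 0, 1] : Matrix (Fin 2) (Fin 2) S) * Lam s w = !![0, 1; 0, 1] := by
  unfold Lam
  split_ifs
  · rw [← mul_assoc, K_mul_P_pow]; simp
  · exact K_mul_P_pow s _

theorem Lam_mul_right_eq_self_of_two_mem (s : S) {w : List ℕ} (hw : 2 ∈ w) (w' : List ℕ) :
    Lam s w * Lam s w' = Lam s w := by
  rw [Lam, if_pos hw, mul_assoc, K_mul_Lam]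

theorem Lam_append_of_two_mem (s : S) {w : List ℕ} (hw : 2 ∈ w) (w' : List ℕ) :
    Lam s (w ++ w') = Lam s w * Lam s w' := by
  have hprefix : (w ++ w').takeWhile (· ≠ 2) = w.takeWhile (· ≠ 2) :=
    List.takeWhile_append_of_exists_not ⟨2, hw, by simp⟩ w'
  rw [Lam_mul_right_eq_self_of_two_mem s hw, Lam, Lam, if_pos (List.mem_append_left w' hw),
    if_pos hw, hprefix]

theorem Lam_append_of_forall_eq_one (s : S) {w : List ℕ} (hw : ∀ a ∈ w, a = 1) (w' : List ℕ) :
    Lam s (w ++ w') = !![s, 0; 0, 1] ^ w.length * Lam s w' := by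
  have h2 : 2 ∉ w := fun h => by simpa using hw 2 h
  by_cases h2' : 2 ∈ w'
  · have hprefix : (w ++ w').takeWhile (· ≠ 2) = w ++ w'.takeWhile (· ≠ 2) :=
      List.takeWhile_append_of_pos fun a ha => by simp [hw a ha]
    have hcount : w.count 1 = w.length := List.count_eq_length.mpr fun a ha => (hw a ha).symm
    rw [Lam, Lam, if_pos (List.mem_append_right w h2'), if_pos h2', hprefix,
      List.count_append, hcount, pow_add, mul_assoc]
  · rw [Lam, Lam, if_neg (by simp [h2, h2']), if_neg h2', List.length_append, pow_add]

theorem Lam_of_forall_eq_one (s : S) {w : List ℕ} (hw : ∀ a ∈ w, a = 1) :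
    Lam s w = !![s, 0; 0, 1] ^ w.length := by
  simpa [Lam] using Lam_append_of_forall_eq_one s hw []

end

theorem stmt19_general {S : Type*} [CommSemiring S] (s : S)
    (w w' : List ℕ)
    (hw : ∀ a ∈ w, a = 1 ∨ a = 2) :
    Lam s (w ++ w') = Lam s w * Lam s w' := by
  by_cases h2 : 2 ∈ w
  · exact Lam_append_of_two_mem s h2 w'
  · have hones : ∀ a ∈ w, a = 1 := fun a ha =>
      (hw a ha).resolve_right fun h => h2 (h ▸ ha)
    rw [Lam_append_of_forall_eq_one s hones, Lam_of_forall_eq_one s hones]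

/-- Over a commutative idempotent semiring `S` (`a + a = a`) containing an element `s`
of infinite multiplicative order, `Λ` is multiplicative on concatenation of words over
`{1, 2}`: `Λ(w·w') = Λ(w)·Λ(w')`. -/
theorem stmt19 {S : Type*} [CommSemiring S] (hidem : ∀ a : S, a + a = a) (s : S)
    (hs : ∀ i j : ℕ, s ^ i = s ^ j → i = j)
    (w w' : List ℕ)
    (hw : ∀ a ∈ w, a = 1 ∨ a = 2) (hw' : ∀ a ∈ w', a = 1 ∨ a = 2) :
    Lam s (w ++ w') = Lam s w * Lam s w' :=
  stmt19_general s w w' hw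
end
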